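/- arXiv:2006.11189 — 3 statements merged into one kernel-verified Lean document; each statement's English description precedes it below -/
import Mathlib

section
/- Let (𝒳, ω) be a left Frobenius pair in an abelian category 𝒞. Then (ω, 𝒳^{⊥1}) is a complete cotorsion pair cut along ω^∧. Moreover, (ω, 𝒳^{⊥1}) is a complete left cotorsion pair cut along 𝒳^∧ if and only if 𝒳^∧ = ω^∧. -/
namespace CutPaper

open CategoryTheory CategoryTheory.Limits CategoryTheory.Abelian ZeroObject

universe w v u

variable {C : Type u} [Category.{v} C] [Abelian C]

/-- There exists a short exact sequence `0 ⟶ X ⟶ Y ⟶ Z ⟶ 0` in `C`. -/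
def SES (X Y Z : C) : Prop :=
  ∃ (f : X ⟶ Y) (g : Y ⟶ Z) (zero : f ≫ g = 0),
    (ShortComplex.mk f g zero).ShortExact

/-- A class of objects is closed under isomorphisms. -/
def ClosedUnderIso (A : Set C) : Prop :=
  ∀ ⦃X Y : C⦄, (X ≅ Y) → X ∈ A → Y ∈ A

/-- A class of objects is closed under direct summands (i.e. retracts). -/
def ClosedUnderDirectSummands (A : Set C) : Prop :=
  ∀ ⦃X Y : C⦄ (i : X ⟶ Y) (r : Y ⟶ X), i ≫ r = 𝟙 X → Y ∈ A → X ∈ A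

/-- A class of objects is closed under extensions. -/
def ClosedUnderExtensions (A : Set C) : Prop :=
  ∀ ⦃X Y Z : C⦄, SES X Y Z → X ∈ A → Z ∈ A → Y ∈ A

/-- A class of objects is closed under kernels of epimorphisms between its objects. -/
def ClosedUnderEpiKernels (A : Set C) : Prop :=
  ∀ ⦃X Y Z : C⦄, SES X Y Z → Y ∈ A → Z ∈ A → X ∈ A

/-- A class of objects is closed under cokernels of monomorphisms between its objects. -/
def ClosedUnderMonoCokernels (A : Set C) : Prop :=
  ∀ ⦃X Y Z : C⦄, SES X Y Z → X ∈ A → Y ∈ A → Z ∈ A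

/-- A class is left thick if it is closed under extensions, epi-kernels and direct summands. -/
def LeftThick (A : Set C) : Prop :=
  ClosedUnderExtensions A ∧ ClosedUnderEpiKernels A ∧ ClosedUnderDirectSummands A

/-- A class is right thick if closed under extensions, mono-cokernels and direct summands. -/
def RightThick (A : Set C) : Prop :=
  ClosedUnderExtensions A ∧ ClosedUnderMonoCokernels A ∧ ClosedUnderDirectSummands A

/-- A class is thick if it is both left and right thick. -/
def IsThickClass (A : Set C) : Prop := LeftThick A ∧ RightThick A

/-- The smallest thick class containing `F`. -/
def ThickClosure (F : Set C) : Set C := ⋂₀ {T : Set C | IsThickClass T ∧ F ⊆ T}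

/-- A class is closed under finite (binary) coproducts. -/
def ClosedUnderBinaryCoproducts (A : Set C) : Prop :=
  ∀ ⦃X Y : C⦄, X ∈ A → Y ∈ A → (X ⊞ Y) ∈ A

/-- `ω` is a relative cogenerator in `A`: `ω ⊆ A` and every `X ∈ A` fits in a short
exact sequence `0 → X → W → X' → 0` with `W ∈ ω`, `X' ∈ A`. -/
def IsRelativeCogenerator (ω A : Set C) : Prop :=
  ω ⊆ A ∧ ∀ X ∈ A, ∃ W X', W ∈ ω ∧ X' ∈ A ∧ SES X W X'

/-- `ν` is a relative generator in `ω`: `ν ⊆ ω` and every `W ∈ ω` fits in a short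
exact sequence `0 → W' → V → W → 0` with `V ∈ ν`, `W' ∈ ω`. -/
def IsRelativeGenerator (ν ω : Set C) : Prop :=
  ν ⊆ ω ∧ ∀ W ∈ ω, ∃ V W', V ∈ ν ∧ W' ∈ ω ∧ SES W' V W

/-- The objects of `B`-resolution dimension at most `n` (the class `B^∧_n`). -/
def ResDimLE (B : Set C) : ℕ → Set C
  | 0 => {X | ∃ B₀ ∈ B, Nonempty (X ≅ B₀)}
  | (n + 1) => ResDimLE B n ∪ {X | ∃ K B₀, K ∈ ResDimLE B n ∧ B₀ ∈ B ∧ SES K B₀ X}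

/-- The class `B^∧` of objects of finite `B`-resolution dimension. -/
def ResFin (B : Set C) : Set C := {X | ∃ n, X ∈ ResDimLE B n}

/-- The `B`-resolution dimension of an object, valued in `ℕ∞`. -/
noncomputable def resDim (B : Set C) (X : C) : ℕ∞ :=
  sInf ((fun n : ℕ => (n : ℕ∞)) '' {n | X ∈ ResDimLE B n})

/-- The objects of `B`-coresolution dimension at most `n` (the class `B^∨_n`). -/
def CoresDimLE (B : Set C) : ℕ → Set C
  | 0 => {X | ∃ B₀ ∈ B, Nonempty (X ≅ B₀)}
  | (n + 1) => CoresDimLE B n ∪ {X | ∃ B₀ K, B₀ ∈ B ∧ K ∈ CoresDimLE B n ∧ SES X B₀ K}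

/-- The `B`-coresolution dimension of an object, valued in `ℕ∞`. -/
noncomputable def coresDim (B : Set C) (X : C) : ℕ∞ :=
  sInf ((fun n : ℕ => (n : ℕ∞)) '' {n | X ∈ CoresDimLE B n})

/-- The class of `(𝒳, 𝒴)`-Gorenstein projective objects: 0-th cycles of exact,
`Hom(-, 𝒴)`-acyclic complexes with components in `𝒳`. -/
def GorensteinProj (𝒳 𝒴 : Set C) : Set C :=
  {M | ∃ K : ChainComplex C ℤ,
    (∀ m : ℤ, K.X m ∈ 𝒳) ∧
    (∀ m : ℤ, K.ExactAt m) ∧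
    (∀ Y₀ ∈ 𝒴, ∀ m : ℤ, ∀ f : K.X m ⟶ Y₀, K.d (m + 1) m ≫ f = 0 →
      ∃ g : K.X (m - 1) ⟶ Y₀, K.d m (m - 1) ≫ g = f) ∧
    Nonempty (M ≅ K.cycles 0)}

section HasExt

variable [HasExt.{w} C]

/-- `Ext¹(A, B) = 0`. -/
def ext1Zero (A B : C) : Prop := Subsingleton (Abelian.Ext.{w} A B 1)

/-- `Extⁱ(A, B) = 0` for all `i ≥ 1`. -/
def extVanish (A B : C) : Prop := ∀ i : ℕ, 1 ≤ i → Subsingleton (Abelian.Ext.{w} A B i)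

/-- `Extⁱ(X, Y) = 0` for all `i ≥ 1`, `X ∈ 𝒜`, `Y ∈ ℬ`. -/
def ExtPairVanish (𝒜 ℬ : Set C) : Prop := ∀ X ∈ 𝒜, ∀ Y ∈ ℬ, extVanish.{w} X Y

/-- The right `Ext¹`-orthogonal complement `𝒜^{⊥1}`. -/
def rightPerp1 (𝒜 : Set C) : Set C := {N | ∀ X ∈ 𝒜, ext1Zero.{w} X N}

/-- The total right orthogonal complement `𝒜^{⊥}`. -/
def rightPerp (𝒜 : Set C) : Set C := {N | ∀ X ∈ 𝒜, extVanish.{w} X N}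

/-- The left `Ext¹`-orthogonal complement `^{⊥1}ℬ`. -/
def leftPerp1 (ℬ : Set C) : Set C := {M | ∀ Y ∈ ℬ, ext1Zero.{w} M Y}

/-- `(𝒜, ℬ)` is a left cotorsion pair cut along `𝒮`. -/
def LeftCutCotorsion (𝒜 ℬ 𝒮 : Set C) : Prop :=
  ClosedUnderDirectSummands 𝒜 ∧ 𝒜 ∩ 𝒮 = leftPerp1.{w} ℬ ∩ 𝒮

/-- `(𝒜, ℬ)` is a complete left cotorsion pair cut along `𝒮`. -/
def CompleteLeftCutCotorsion (𝒜 ℬ 𝒮 : Set C) : Prop :=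
  LeftCutCotorsion.{w} 𝒜 ℬ 𝒮 ∧ ∀ S ∈ 𝒮, ∃ B₀ A₀, B₀ ∈ ℬ ∧ A₀ ∈ 𝒜 ∧ SES B₀ A₀ S

/-- `(𝒜, ℬ)` is a right cotorsion pair cut along `𝒮`. -/
def RightCutCotorsion (𝒜 ℬ 𝒮 : Set C) : Prop :=
  ClosedUnderDirectSummands ℬ ∧ ℬ ∩ 𝒮 = rightPerp1.{w} 𝒜 ∩ 𝒮

/-- `(𝒜, ℬ)` is a complete right cotorsion pair cut along `𝒮`. -/
def CompleteRightCutCotorsion (𝒜 ℬ 𝒮 : Set C) : Prop :=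
  RightCutCotorsion.{w} 𝒜 ℬ 𝒮 ∧ ∀ S ∈ 𝒮, ∃ B₀ A₀, B₀ ∈ ℬ ∧ A₀ ∈ 𝒜 ∧ SES S B₀ A₀

/-- `(𝒜, ℬ)` is a complete cotorsion pair cut along `𝒮`. -/
def CompleteCutCotorsion (𝒜 ℬ 𝒮 : Set C) : Prop :=
  CompleteLeftCutCotorsion.{w} 𝒜 ℬ 𝒮 ∧ CompleteRightCutCotorsion.{w} 𝒜 ℬ 𝒮

/-- `(𝒜, ℬ)` is a complete left cotorsion pair in `C`. -/
def CompleteLeftCotorsionPair (𝒜 ℬ : Set C) : Prop :=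
  𝒜 = leftPerp1.{w} ℬ ∧ ∀ X : C, ∃ B₀ A₀, B₀ ∈ ℬ ∧ A₀ ∈ 𝒜 ∧ SES B₀ A₀ X

/-- `(𝒜, ℬ)` is a complete cotorsion pair in `C`. -/
def CompleteCotorsionPair (𝒜 ℬ : Set C) : Prop :=
  CompleteLeftCotorsionPair.{w} 𝒜 ℬ ∧ ℬ = rightPerp1.{w} 𝒜 ∧
    ∀ X : C, ∃ B₀ A₀, B₀ ∈ ℬ ∧ A₀ ∈ 𝒜 ∧ SES X B₀ A₀

/-- `(𝒳, ω)` is a left Frobenius pair in `C`. -/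
def LeftFrobenius (𝒳 ω : Set C) : Prop :=
  LeftThick 𝒳 ∧ ClosedUnderDirectSummands ω ∧
    ExtPairVanish.{w} 𝒳 ω ∧ IsRelativeCogenerator ω 𝒳

/-- `(𝒳, ω)` is a left Frobenius pair cut along `𝒮`. -/
def LeftFrobeniusCutAlong (𝒳 ω 𝒮 : Set C) : Prop :=
  LeftThick 𝒳 ∧
  LeftFrobenius.{w} (𝒳 ∩ 𝒮) (ω ∩ 𝒮) ∧
  (ExtPairVanish.{w} (ω ∩ 𝒮) ω ∧ IsRelativeGenerator (ω ∩ 𝒮) ω) ∧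
  (ClosedUnderExtensions ω ∧ ClosedUnderDirectSummands ω)

/-- `(𝒜, ℬ)` is a left weak AB context in `C`. -/
def LeftWeakABContext (𝒜 ℬ : Set C) : Prop :=
  LeftFrobenius.{w} 𝒜 (𝒜 ∩ ℬ) ∧ RightThick ℬ ∧ ℬ ⊆ ResFin 𝒜

/-- `(𝒜, ℬ)` is a left weak AB context cut along `𝒮`. -/
def LeftWeakABContextCutAlong (𝒜 ℬ 𝒮 : Set C) : Prop :=
  LeftFrobeniusCutAlong.{w} 𝒜 (𝒜 ∩ ℬ) 𝒮 ∧ RightThick (ℬ ∩ 𝒮) ∧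
    ℬ ∩ 𝒮 ⊆ ResFin (𝒜 ∩ 𝒮)

/-- `(𝒳, 𝒴)` is a GP-admissible pair. -/
def GPAdmissible (𝒳 𝒴 : Set C) : Prop :=
  ExtPairVanish.{w} 𝒳 𝒴 ∧
  (∀ M : C, ∃ X₀, X₀ ∈ 𝒳 ∧ ∃ p : X₀ ⟶ M, Epi p) ∧
  ClosedUnderBinaryCoproducts 𝒳 ∧ ClosedUnderBinaryCoproducts 𝒴 ∧
  ClosedUnderExtensions 𝒳 ∧
  IsRelativeCogenerator (𝒳 ∩ 𝒴) 𝒳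

/-- The class `ℰ_l(𝒜, ℬ)` of objects admitting a suitable left approximation. -/
def EClassLeft (𝒜 ℬ : Set C) : Set C :=
  {X | ∃ B₀ A₀, B₀ ∈ ℬ ∧ A₀ ∈ 𝒜 ∧ SES B₀ A₀ X}

/-- The maximal left cotorsion cut `𝕊_l(𝒜, ℬ)`. -/
def MaxLeftCut (𝒜 ℬ : Set C) : Set C :=
  ⋃₀ {𝒮 | CompleteLeftCutCotorsion.{w} 𝒜 ℬ 𝒮}

/-- `pd(M) ≤ n`, via vanishing of `Ext` in degrees `> n`. -/
def pdLE (M : C) (n : ℕ) : Prop :=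
  ∀ i : ℕ, n < i → ∀ N : C, Subsingleton (Abelian.Ext.{w} M N i)

/-- The projective dimension of an object, valued in `ℕ∞`. -/
noncomputable def pd (M : C) : ℕ∞ :=
  sInf ((fun n : ℕ => (n : ℕ∞)) '' {n | pdLE.{w} M n})

/-- The projective dimension of a class of objects. -/
noncomputable def pdClass (𝒜 : Set C) : ℕ∞ := ⨆ M ∈ 𝒜, pd.{w} M

/-- The `𝔓_𝒮`-condition of the second correspondence theorem. -/
def PPair (𝒮 ℱ 𝒢 : Set C) : Prop :=
  CompleteCutCotorsion.{w} ℱ 𝒢 (ThickClosure ℱ) ∧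
  ExtPairVanish.{w} ℱ 𝒢 ∧
  IsRelativeGenerator (ℱ ∩ 𝒢 ∩ 𝒮) (ℱ ∩ 𝒢) ∧
  IsRelativeCogenerator (ℱ ∩ 𝒢 ∩ 𝒮) (ℱ ∩ 𝒢)

end HasExt

/-- The class of projective objects of `C`. -/
def ProjClass (C : Type u) [Category.{v} C] : Set C := {P : C | Projective P}

section HasExt
variable (C) [HasExt.{w} C]

/-- The finitistic dimension of `C`. -/
noncomputable def Findim : ℕ∞ := pdClass.{w} (ResFin (ProjClass C))

end HasExt

/-!
Dimension shifting along `ω`-resolutions gives `Extⁱ(𝒳, ω^∧) = 0` for `i ≥ 1`, so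
`ω^∧ ⊆ 𝒳^{⊥1}`. Every `S ∈ ω^∧` sits in a sequence `0 → K → W → S → 0` with `W ∈ ω` and
`K ∈ ω^∧`: this is the left approximation, and if `Ext¹(S, 𝒳^{⊥1}) = 0` it splits, so `S` is a
summand of `W`. The right approximation is `0 → S → S → 0 → 0`, as `0 ∈ ω` is a summand of
anything. Finally `𝒳 ⊆ ^{⊥1}(𝒳^{⊥1}) ∩ 𝒳^∧`, so cutting along `𝒳^∧` forces `𝒳 = ω`.
-/

section Ext

variable [HasExt.{w} C]

lemma subsingleton_ext_of_retract {X Y Y' : C} {n : ℕ} (i : Y ⟶ Y') (r : Y' ⟶ Y)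
    (hir : i ≫ r = 𝟙 Y) (h : Subsingleton (Ext.{w} X Y' n)) : Subsingleton (Ext.{w} X Y n) := by
  have hinv : Function.LeftInverse (fun β : Ext.{w} X Y' n => β.comp (Ext.mk₀ r) (add_zero n))
      (fun α => α.comp (Ext.mk₀ i) (add_zero n)) := fun α => by
    simp only [Ext.comp_assoc_of_third_deg_zero, Ext.mk₀_comp_mk₀, hir, Ext.comp_mk₀_id]
  exact hinv.injective.subsingleton

lemma subsingleton_ext_X₃_of_shortExact {X : C} {S : ShortComplex C} (hS : S.ShortExact) {n : ℕ}
    (h₂ : Subsingleton (Ext.{w} X S.X₂ n)) (h₁ : Subsingleton (Ext.{w} X S.X₁ (n + 1))) :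
    Subsingleton (Ext.{w} X S.X₃ n) := by
  refine subsingleton_of_forall_eq 0 fun α => ?_
  obtain ⟨β, rfl⟩ := Ext.covariant_sequence_exact₃ X hS α rfl (Subsingleton.elim _ _)
  rw [Subsingleton.elim β 0, Ext.zero_comp]

lemma exists_section_of_shortExact {S : ShortComplex C} (hS : S.ShortExact)
    (h : Subsingleton (Ext.{w} S.X₃ S.X₁ 1)) : ∃ s : S.X₃ ⟶ S.X₂, s ≫ S.g = 𝟙 S.X₃ := by
  obtain ⟨x, hx⟩ :=
    Ext.covariant_sequence_exact₃ S.X₃ hS (Ext.mk₀ (𝟙 S.X₃)) rfl (Subsingleton.elim _ _)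
  obtain ⟨s, rfl⟩ := (Ext.mk₀_bijective S.X₃ S.X₂).2 x
  rw [Ext.mk₀_comp_mk₀] at hx
  exact ⟨s, (Ext.mk₀_bijective _ _).1 hx⟩

end Ext

lemma ses_zero_left (X : C) : SES (0 : C) X X :=
  ⟨0, 𝟙 X, zero_comp,
    (ShortComplex.Splitting.ofIsZeroOfIsIso _ (isZero_zero C) (IsIso.id X)).shortExact⟩

lemma ses_zero_right (X : C) : SES X X (0 : C) :=
  ⟨𝟙 X, 0, comp_zero,
    (ShortComplex.Splitting.ofIsIsoOfIsZero _ (IsIso.id X) (isZero_zero C)).shortExact⟩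

lemma ClosedUnderDirectSummands.zero_mem {A : Set C} (hA : ClosedUnderDirectSummands A)
    {W : C} (hW : W ∈ A) : (0 : C) ∈ A :=
  hA 0 0 (by simp) hW

lemma subset_resFin (ω : Set C) : ω ⊆ ResFin ω :=
  fun W hW => ⟨0, W, hW, ⟨Iso.refl W⟩⟩

lemma exists_ses_of_mem_resFin {ω : Set C} (hω : ClosedUnderDirectSummands ω) {S : C}
    (hS : S ∈ ResFin ω) : ∃ K W, K ∈ ResFin ω ∧ W ∈ ω ∧ SES K W S := by
  obtain ⟨n, hS⟩ := hS
  induction n generalizing S with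
  | zero =>
    obtain ⟨W, hW, ⟨e⟩⟩ := hS
    have hSω : S ∈ ω := hω e.hom e.inv e.hom_inv_id hW
    exact ⟨0, S, subset_resFin ω (hω.zero_mem hSω), hSω, ses_zero_left S⟩
  | succ n ih =>
    rcases hS with hS | ⟨K, W, hK, hW, hses⟩
    · exact ih hS
    · exact ⟨K, W, ⟨n, hK⟩, hW, hses⟩

section Orthogonal

variable [HasExt.{w} C]

lemma SES.mem_of_ext1Zero {A : Set C} (hA : ClosedUnderDirectSummands A) {K W M : C}
    (h : SES K W M) (hW : W ∈ A) (hext : ext1Zero.{w} M K) : M ∈ A := by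
  obtain ⟨_, g, _, hS⟩ := h
  obtain ⟨s, hs⟩ := exists_section_of_shortExact hS hext
  exact hA s g hs hW

lemma extVanish_of_iso {X Y Y' : C} (e : Y ≅ Y') (h : extVanish.{w} X Y') :
    extVanish.{w} X Y :=
  fun i hi => subsingleton_ext_of_retract e.hom e.inv e.hom_inv_id (h i hi)

lemma extVanish_of_mem_resDimLE {X : C} {ω : Set C} (hω : ∀ W ∈ ω, extVanish.{w} X W)
    (n : ℕ) : ∀ N ∈ ResDimLE ω n, extVanish.{w} X N := by
  induction n with
  | zero =>
    rintro N ⟨W, hW, ⟨e⟩⟩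
    exact extVanish_of_iso e (hω W hW)
  | succ n ih =>
    rintro N (hN | ⟨K, W, hK, hW, _, _, _, hses⟩) i hi
    · exact ih N hN i hi
    · exact subsingleton_ext_X₃_of_shortExact hses (hω W hW i hi) (ih K hK (i + 1) (by omega))

lemma resFin_subset_rightPerp1 {𝒳 ω : Set C} (hvan : ExtPairVanish.{w} 𝒳 ω) :
    ResFin ω ⊆ rightPerp1.{w} 𝒳 :=
  fun N ⟨n, hN⟩ X hX => extVanish_of_mem_resDimLE (hvan X hX) n N hN 1 le_rfl

lemma rightPerp1_anti {𝒜 ℬ : Set C} (h : 𝒜 ⊆ ℬ) : rightPerp1.{w} ℬ ⊆ rightPerp1.{w} 𝒜 :=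
  fun _ hN X hX => hN X (h hX)

lemma subset_leftPerp1_rightPerp1 (𝒜 : Set C) : 𝒜 ⊆ leftPerp1.{w} (rightPerp1.{w} 𝒜) :=
  fun X hX _ hN => hN X hX

lemma closedUnderDirectSummands_rightPerp1 (𝒜 : Set C) :
    ClosedUnderDirectSummands (rightPerp1.{w} 𝒜) :=
  fun _ _ i r hir hN X hX => subsingleton_ext_of_retract i r hir (hN X hX)

variable {𝒳 ω : Set C}

lemma completeLeftCutCotorsion_resFin (hω : ClosedUnderDirectSummands ω)
    (hvan : ExtPairVanish.{w} 𝒳 ω) (hω𝒳 : ω ⊆ 𝒳) :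
    CompleteLeftCutCotorsion.{w} ω (rightPerp1.{w} 𝒳) (ResFin ω) := by
  refine ⟨⟨hω, Set.ext fun M => ⟨fun ⟨hM, hfin⟩ => ?_, fun ⟨hperp, hfin⟩ => ?_⟩⟩, fun S hS => ?_⟩
  · exact ⟨subset_leftPerp1_rightPerp1 𝒳 (hω𝒳 hM), hfin⟩
  · obtain ⟨K, W, hK, hW, hses⟩ := exists_ses_of_mem_resFin hω hfin
    exact ⟨hses.mem_of_ext1Zero hω hW (hperp K (resFin_subset_rightPerp1 hvan hK)), hfin⟩
  · obtain ⟨K, W, hK, hW, hses⟩ := exists_ses_of_mem_resFin hω hS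
    exact ⟨K, W, resFin_subset_rightPerp1 hvan hK, hW, hses⟩

lemma completeRightCutCotorsion_resFin (hω : ClosedUnderDirectSummands ω)
    (hvan : ExtPairVanish.{w} 𝒳 ω) (hω𝒳 : ω ⊆ 𝒳) :
    CompleteRightCutCotorsion.{w} ω (rightPerp1.{w} 𝒳) (ResFin ω) := by
  refine ⟨⟨closedUnderDirectSummands_rightPerp1 𝒳, Set.ext fun N =>
    ⟨fun ⟨hN, hfin⟩ => ⟨rightPerp1_anti hω𝒳 hN, hfin⟩,
     fun ⟨_, hfin⟩ => ⟨resFin_subset_rightPerp1 hvan hfin, hfin⟩⟩⟩, fun S hS => ?_⟩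
  obtain ⟨-, W, -, hW, -⟩ := exists_ses_of_mem_resFin hω hS
  exact ⟨S, 0, resFin_subset_rightPerp1 hvan hS, hω.zero_mem hW, ses_zero_right S⟩

lemma subset_of_leftCutCotorsion_resFin
    (h : LeftCutCotorsion.{w} ω (rightPerp1.{w} 𝒳) (ResFin 𝒳)) : 𝒳 ⊆ ω := fun X hX =>
  (h.2 ▸ ⟨subset_leftPerp1_rightPerp1 𝒳 hX, subset_resFin 𝒳 hX⟩ : X ∈ ω ∩ ResFin 𝒳).1

end Orthogonal

/-- Proposition 2.3 (2),(3). If `(𝒳, ω)` is a left Frobenius pair, then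
`(ω, 𝒳^{⊥1})` is a complete cotorsion pair cut along `ω^∧`; and `(ω, 𝒳^{⊥1})` is a complete
left cotorsion pair cut along `𝒳^∧` iff `𝒳^∧ = ω^∧`. -/
theorem leftFrobenius_omega_rightPerp1_cut
    {C : Type u} [CategoryTheory.Category.{v} C] [CategoryTheory.Abelian C]
    [CategoryTheory.HasExt.{w} C]
    (𝒳 ω : Set C) (h : LeftFrobenius.{w} 𝒳 ω) :
    CompleteCutCotorsion.{w} ω (rightPerp1.{w} 𝒳) (ResFin ω) ∧
    (CompleteLeftCutCotorsion.{w} ω (rightPerp1.{w} 𝒳) (ResFin 𝒳) ↔ ResFin 𝒳 = ResFin ω) := by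
  obtain ⟨-, hω, hvan, hω𝒳, -⟩ := h
  have hleft := completeLeftCutCotorsion_resFin hω hvan hω𝒳
  refine ⟨⟨hleft, completeRightCutCotorsion_resFin hω hvan hω𝒳⟩, fun hcut => ?_, fun heq => ?_⟩
  · rw [(subset_of_leftCutCotorsion_resFin hcut.1).antisymm hω𝒳]
  · rwa [heq]

end CutPaper
end

section
/- Let 𝒜 and ℬ be classes of objects in an abelian category 𝒞 such that 𝒜 is closed under direct summands and 0 ∈ ℬ. The following are equivalent: (a) Ext^1(A, B) = 0 for all A ∈ 𝒜 and B ∈ ℬ; (b) 𝕊_l(𝒜, ℬ) = ℰ_l(𝒜, ℬ); (c) (𝒜, ℬ) is a complete left cotorsion pair cut along ℰ_l(𝒜, ℬ); (d) 𝒜 = ^{⊥1}ℬ ∩ ℰ_l(𝒜, ℬ). -/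
namespace CutPaper

open CategoryTheory CategoryTheory.Limits CategoryTheory.Abelian ZeroObject

universe w v u

variable {C : Type u} [Category.{v} C] [Abelian C]

/-
The class `ℰ_l(𝒜, ℬ)` always contains `𝒜` (via `0 → 0 → A → A → 0`, as `0 ∈ ℬ`) and every
cut `𝒮` of `(𝒜, ℬ)`, so `𝕊_l(𝒜, ℬ) ⊆ ℰ_l(𝒜, ℬ)`. Conversely, an object of `^{⊥1}ℬ ∩ ℰ_l(𝒜, ℬ)`
is a direct summand of an object of `𝒜`: its defining sequence `0 → B → A → M → 0` splits
because `Ext¹(M, B) = 0`. Hence `^{⊥1}ℬ ∩ ℰ_l(𝒜, ℬ) ⊆ 𝒜`, with equality exactly when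
`Ext¹(𝒜, ℬ) = 0`; conditions (b) and (c) unwind to the same equality.
-/

lemma SES.zero_left (A : C) : SES (0 : C) A A :=
  ⟨0, 𝟙 A, by simp,
    (ShortComplex.Splitting.ofIsZeroOfIsIso _ (isZero_zero C) (by dsimp; infer_instance)).shortExact⟩

lemma subset_eClassLeft {𝒜 ℬ : Set C} (hℬ : (0 : C) ∈ ℬ) : 𝒜 ⊆ EClassLeft 𝒜 ℬ :=
  fun A hA => ⟨0, A, hℬ, hA, SES.zero_left A⟩

section HasExt

variable [HasExt.{w} C]

lemma _root_.CategoryTheory.ShortComplex.ShortExact.exists_section_of_ext1Zero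
    {S : ShortComplex C} (hS : S.ShortExact) (h : ext1Zero.{w} S.X₃ S.X₁) :
    ∃ σ : S.X₃ ⟶ S.X₂, σ ≫ S.g = 𝟙 S.X₃ := by
  obtain ⟨x, hx⟩ := Ext.covariant_sequence_exact₃ S.X₃ hS (Ext.mk₀ (𝟙 S.X₃)) (zero_add 1)
    (h.elim _ _)
  refine ⟨Ext.homEquiv₀ x, (Ext.mk₀_bijective _ _).1 ?_⟩
  rw [← Ext.mk₀_comp_mk₀, Ext.mk₀_homEquiv₀_apply, hx]

variable {𝒜 ℬ : Set C}

lemma leftPerp1_inter_eClassLeft_subset (h𝒜 : ClosedUnderDirectSummands 𝒜) :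
    leftPerp1.{w} ℬ ∩ EClassLeft 𝒜 ℬ ⊆ 𝒜 := by
  rintro M ⟨hM, B, A, hB, hA, f, g, _, hS⟩
  obtain ⟨σ, hσ⟩ := hS.exists_section_of_ext1Zero (hM B hB)
  exact h𝒜 σ g hσ hA

lemma CompleteLeftCutCotorsion.subset_maxLeftCut {𝒮 : Set C}
    (h : CompleteLeftCutCotorsion.{w} 𝒜 ℬ 𝒮) : 𝒮 ⊆ MaxLeftCut.{w} 𝒜 ℬ :=
  Set.subset_sUnion_of_mem h

lemma maxLeftCut_subset_eClassLeft : MaxLeftCut.{w} 𝒜 ℬ ⊆ EClassLeft 𝒜 ℬ :=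
  Set.sUnion_subset fun _ h => h.2

lemma inter_maxLeftCut_subset_leftPerp1 : 𝒜 ∩ MaxLeftCut.{w} 𝒜 ℬ ⊆ leftPerp1.{w} ℬ := by
  rintro A ⟨hA, 𝒮, h𝒮, hA𝒮⟩
  exact (h𝒮.1.2 ▸ ⟨hA, hA𝒮⟩ : A ∈ leftPerp1.{w} ℬ ∩ 𝒮).1

lemma completeLeftCutCotorsion_eClassLeft_iff :
    CompleteLeftCutCotorsion.{w} 𝒜 ℬ (EClassLeft 𝒜 ℬ) ↔
      LeftCutCotorsion.{w} 𝒜 ℬ (EClassLeft 𝒜 ℬ) :=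
  ⟨And.left, fun h => ⟨h, fun _ hS => hS⟩⟩

end HasExt

/-- Theorem 2.17. For classes `𝒜`, `ℬ` with `𝒜` closed under direct
summands and `0 ∈ ℬ`, the following are equivalent: (a) `Ext¹(𝒜, ℬ) = 0`;
(b) `𝕊_l(𝒜, ℬ) = ℰ_l(𝒜, ℬ)`; (c) `ℰ_l(𝒜, ℬ)` is a left cotorsion cut for `(𝒜, ℬ)`;
(d) `𝒜 = ^{⊥1}ℬ ∩ ℰ_l(𝒜, ℬ)`. -/
theorem maxLeftCut_eq_eClassLeft_tfae
    {C : Type u} [CategoryTheory.Category.{v} C] [CategoryTheory.Abelian C]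
    [CategoryTheory.HasExt.{w} C]
    (𝒜 ℬ : Set C) (h𝒜 : ClosedUnderDirectSummands 𝒜) (hℬ : (0 : C) ∈ ℬ) :
    ((∀ A ∈ 𝒜, ∀ B ∈ ℬ, ext1Zero.{w} A B) ↔ MaxLeftCut.{w} 𝒜 ℬ = EClassLeft 𝒜 ℬ) ∧
    ((∀ A ∈ 𝒜, ∀ B ∈ ℬ, ext1Zero.{w} A B) ↔
      CompleteLeftCutCotorsion.{w} 𝒜 ℬ (EClassLeft 𝒜 ℬ)) ∧
    ((∀ A ∈ 𝒜, ∀ B ∈ ℬ, ext1Zero.{w} A B) ↔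
      𝒜 = leftPerp1.{w} ℬ ∩ EClassLeft 𝒜 ℬ) := by
  have h𝒜E : 𝒜 ⊆ EClassLeft 𝒜 ℬ := subset_eClassLeft hℬ
  have tfae : [∀ A ∈ 𝒜, ∀ B ∈ ℬ, ext1Zero.{w} A B, MaxLeftCut.{w} 𝒜 ℬ = EClassLeft 𝒜 ℬ,
      CompleteLeftCutCotorsion.{w} 𝒜 ℬ (EClassLeft 𝒜 ℬ),
      𝒜 = leftPerp1.{w} ℬ ∩ EClassLeft 𝒜 ℬ].TFAE := by
    tfae_have 1 → 4 := fun ha => (Set.subset_inter (fun A hA B hB => ha A hA B hB) h𝒜E).antisymm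
      (leftPerp1_inter_eClassLeft_subset h𝒜)
    tfae_have 4 → 3 := fun hd => completeLeftCutCotorsion_eClassLeft_iff.2
      ⟨h𝒜, by rw [Set.inter_eq_left.2 h𝒜E, ← hd]⟩
    tfae_have 3 → 2 := fun hc => maxLeftCut_subset_eClassLeft.antisymm hc.subset_maxLeftCut
    tfae_have 2 → 1 := fun hb A hA =>
      inter_maxLeftCut_subset_leftPerp1 ⟨hA, hb ▸ h𝒜E hA⟩
    tfae_finish
  exact ⟨tfae.out 0 1, tfae.out 0 2, tfae.out 0 3⟩

end CutPaper
end

section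
/- Let 𝒜_1, 𝒜_2, ℬ_1, ℬ_2, 𝒮_1, 𝒮_2 be classes of objects in an abelian category 𝒞, with 𝒜_1 and 𝒜_2 closed under direct summands, 0 ∈ ℬ_1 ∩ ℬ_2, (𝒜_1, ℬ_1) a complete left cotorsion pair cut along 𝒮_1 and (𝒜_2, ℬ_2) a complete left cotorsion pair cut along 𝒮_2. If Ext^1(A, B) = 0 for all A ∈ 𝒜_1, B ∈ ℬ_2 and for all A ∈ 𝒜_2, B ∈ ℬ_1, and 𝒜_1 ∩ 𝒮_2 = 𝒜_2 ∩ 𝒮_1, then (𝒜_1 ∪ 𝒜_2, ℬ_1 ∪ ℬ_2) is a complete left cotorsion pair cut along 𝒮_1 ∪ 𝒮_2. -/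
namespace CutPaper

open CategoryTheory CategoryTheory.Limits CategoryTheory.Abelian ZeroObject

universe w v u

variable {C : Type u} [Category.{v} C] [Abelian C]

open ZeroObject

/-- Proposition 2.20. The union of two compatible complete left cut
cotorsion pairs is a complete left cut cotorsion pair along the union of the cuts. -/
theorem compatible_union_completeLeftCutCotorsion
    {C : Type u} [CategoryTheory.Category.{v} C] [CategoryTheory.Abelian C]
    [CategoryTheory.HasExt.{w} C]
    (𝒜₁ 𝒜₂ ℬ₁ ℬ₂ 𝒮₁ 𝒮₂ : Set C)
    (h𝒜₁ : ClosedUnderDirectSummands 𝒜₁) (h𝒜₂ : ClosedUnderDirectSummands 𝒜₂)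
    (hℬ : (0 : C) ∈ ℬ₁ ∩ ℬ₂)
    (h₁ : CompleteLeftCutCotorsion.{w} 𝒜₁ ℬ₁ 𝒮₁)
    (h₂ : CompleteLeftCutCotorsion.{w} 𝒜₂ ℬ₂ 𝒮₂)
    (hext₁ : ∀ A ∈ 𝒜₁, ∀ B ∈ ℬ₂, ext1Zero.{w} A B)
    (hext₂ : ∀ A ∈ 𝒜₂, ∀ B ∈ ℬ₁, ext1Zero.{w} A B)
    (hcomp : 𝒜₁ ∩ 𝒮₂ = 𝒜₂ ∩ 𝒮₁) :
    CompleteLeftCutCotorsion.{w} (𝒜₁ ∪ 𝒜₂) (ℬ₁ ∪ ℬ₂) (𝒮₁ ∪ 𝒮₂) := by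
  obtain ⟨⟨hs₁, he₁⟩, hc₁⟩ := h₁
  obtain ⟨⟨hs₂, he₂⟩, hc₂⟩ := h₂
  refine ⟨⟨?_, ?_⟩, ?_⟩
  · intro X Y i r hir hY
    rcases hY with hY | hY
    · exact Or.inl (h𝒜₁ i r hir hY)
    · exact Or.inr (h𝒜₂ i r hir hY)
  · ext X
    constructor
    · rintro ⟨hA, hS⟩
      refine ⟨?_, hS⟩
      intro B hB
      rcases hA with hA | hA
      · rcases hB with hB | hB
        · rcases hS with hS | hS
          · have : X ∈ leftPerp1.{w} ℬ₁ ∩ 𝒮₁ := he₁ ▸ ⟨hA, hS⟩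
            exact this.1 B hB
          · have hX2 : X ∈ 𝒜₂ ∩ 𝒮₁ := hcomp ▸ ⟨hA, hS⟩
            exact hext₂ X hX2.1 B hB
        · exact hext₁ X hA B hB
      · rcases hB with hB | hB
        · exact hext₂ X hA B hB
        · rcases hS with hS | hS
          · have hX1 : X ∈ 𝒜₁ ∩ 𝒮₂ := hcomp ▸ ⟨hA, hS⟩
            exact hext₁ X hX1.1 B hB
          · have : X ∈ leftPerp1.{w} ℬ₂ ∩ 𝒮₂ := he₂ ▸ ⟨hA, hS⟩
            exact this.1 B hB
    · rintro ⟨hP, hS⟩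
      rcases hS with hS | hS
      · have : X ∈ 𝒜₁ ∩ 𝒮₁ := by
          rw [he₁]
          exact ⟨fun B hB => hP B (Or.inl hB), hS⟩
        exact ⟨Or.inl this.1, Or.inl hS⟩
      · have : X ∈ 𝒜₂ ∩ 𝒮₂ := by
          rw [he₂]
          exact ⟨fun B hB => hP B (Or.inr hB), hS⟩
        exact ⟨Or.inr this.1, Or.inr hS⟩
  · rintro S (hS | hS)
    · obtain ⟨B₀, A₀, hB₀, hA₀, hses⟩ := hc₁ S hS
      exact ⟨B₀, A₀, Or.inl hB₀, Or.inl hA₀, hses⟩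
    · obtain ⟨B₀, A₀, hB₀, hA₀, hses⟩ := hc₂ S hS
      exact ⟨B₀, A₀, Or.inr hB₀, Or.inr hA₀, hses⟩

end CutPaper
end
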